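/- Let H : ℝ³ → ℝ be Lipschitz with constant L. Let u, v be affine functions on a triangle K ⊂ ℝ² with vertices x₁, x₂, x₃ such that v(xᵢ) ≥ u(xᵢ) for all i. Then |H(∇v) − H(∇u)| ≤ L·C(K)·Σᵢ (v(xᵢ) − u(xᵢ)), where C(K) > 0 depends only on the geometry of K (it can be taken as the inverse of the inradius of K times an absolute constant). -/

import Mathlib

open RealInnerProductSpace

/-! The difference `v - u` is affine with gradient `∇v - ∇u` and is nonnegative at the vertices,
so each of its increments along an edge is bounded by the sum of its vertex values. The edges
of a nondegenerate triangle span the plane, hence by equivalence of norms in finite dimension the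
gradient of an affine function is controlled by its increments along the edges. The Lipschitz
bound on `H` finishes the argument. -/

theorem abs_sub_le_sum_of_nonneg {ι G : Type*} [Fintype ι] [AddCommGroup G] [LinearOrder G]
    [IsOrderedAddMonoid G] {a : ι → G} (ha : ∀ i, 0 ≤ a i) (i j : ι) :
    |a i - a j| ≤ ∑ k, a k :=
  abs_sub_le_of_nonneg_of_le (ha i) (Finset.single_le_sum (fun k _ => ha k) (Finset.mem_univ i))
    (ha j) (Finset.single_le_sum (fun k _ => ha k) (Finset.mem_univ j))

section InverseEstimate

variable {ι V : Type*} [NormedAddCommGroup V] [InnerProductSpace ℝ V]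

theorem eq_zero_of_inner_eq_zero_of_span_eq_top {v : ι → V}
    (hv : Submodule.span ℝ (Set.range v) = ⊤) {g : V} (hg : ∀ i, ⟪v i, g⟫ = 0) : g = 0 := by
  have hspan : Submodule.span ℝ (Set.range v) ≤ LinearMap.ker (innerₛₗ ℝ g) :=
    Submodule.span_le.mpr <| Set.range_subset_iff.mpr fun i =>
      show ⟪g, v i⟫ = 0 from (real_inner_comm _ _).trans (hg i)
  exact inner_self_eq_zero.mp (hspan (hv ▸ Submodule.mem_top))

theorem exists_norm_le_mul_norm_inner_of_span_eq_top [Fintype ι] [FiniteDimensional ℝ V]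
    {v : ι → V} (hv : Submodule.span ℝ (Set.range v) = ⊤) :
    ∃ C, 0 < C ∧ ∀ g : V, ‖g‖ ≤ C * ‖fun i => ⟪v i, g⟫‖ := by
  let T : V →ₗ[ℝ] ι → ℝ := LinearMap.pi fun i => innerₛₗ ℝ (v i)
  have hT : LinearMap.ker T = ⊥ := LinearMap.ker_eq_bot'.mpr fun g hg =>
    eq_zero_of_inner_eq_zero_of_span_eq_top hv fun i => congr_fun hg i
  obtain ⟨K, hK, hanti⟩ := T.exists_antilipschitzWith hT
  refine ⟨K, hK, fun g => ?_⟩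
  have h := hanti.le_mul_norm_sub 0 g
  rw [neg_zero, zero_add, map_zero, neg_zero, zero_add] at h
  exact h

variable {P : Type*} [AddTorsor V P]

theorem span_range_vsub_eq_vectorSpan (p : ι → P) :
    Submodule.span ℝ (Set.range fun ij : ι × ι => p ij.1 -ᵥ p ij.2) =
      vectorSpan ℝ (Set.range p) := by
  rw [vectorSpan_def, ← Set.image2_vsub, Set.image2_range]

theorem exists_norm_le_mul_sum_of_vectorSpan_eq_top [Fintype ι] [FiniteDimensional ℝ V]
    {p : ι → P} (hp : vectorSpan ℝ (Set.range p) = ⊤) :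
    ∃ C, 0 < C ∧ ∀ (f : P →ᵃ[ℝ] ℝ) (g : V), (∀ w, f.linear w = ⟪g, w⟫) →
      (∀ i, 0 ≤ f (p i)) → ‖g‖ ≤ C * ∑ i, f (p i) := by
  obtain ⟨C, hC, hnorm⟩ := exists_norm_le_mul_norm_inner_of_span_eq_top
    ((span_range_vsub_eq_vectorSpan p).trans hp)
  refine ⟨C, hC, fun f g hf hpos => (hnorm g).trans ?_⟩
  have hedge : ∀ ij : ι × ι, ⟪p ij.1 -ᵥ p ij.2, g⟫ = f (p ij.1) - f (p ij.2) := fun ij => by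
    rw [real_inner_comm, ← hf, f.linearMap_vsub, vsub_eq_sub]
  gcongr
  refine (pi_norm_le_iff_of_nonneg (Finset.sum_nonneg fun i _ => hpos i)).mpr fun ij => ?_
  rw [Real.norm_eq_abs, hedge]
  exact abs_sub_le_sum_of_nonneg hpos ij.1 ij.2

end InverseEstimate

/-- Monotonicity-type estimate for the numerical Hamiltonian: for a nondegenerate
triangle K with vertices x₁, x₂, x₃ there is C(K) > 0 such that for every L-Lipschitz H
and affine u, v with u(xᵢ) ≤ v(xᵢ),
|H(∇v) − H(∇u)| ≤ L·C(K)·Σᵢ (v(xᵢ) − u(xᵢ)). -/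
theorem hamiltonian_affine_gradient_bound
    (x₁ x₂ x₃ : EuclideanSpace ℝ (Fin 2))
    (hnd : AffineIndependent ℝ ![x₁, x₂, x₃]) :
    ∃ CK : ℝ, 0 < CK ∧
      ∀ (L : ℝ), 0 ≤ L →
      ∀ H : EuclideanSpace ℝ (Fin 2) → ℝ, LipschitzWith (Real.toNNReal L) H →
      ∀ (u v : EuclideanSpace ℝ (Fin 2) →ᵃ[ℝ] ℝ)
        (gu gv : EuclideanSpace ℝ (Fin 2)),
        (∀ w, u.linear w = ⟪gu, w⟫) → (∀ w, v.linear w = ⟪gv, w⟫) →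
        u x₁ ≤ v x₁ → u x₂ ≤ v x₂ → u x₃ ≤ v x₃ →
        |H gv - H gu| ≤ L * CK * ((v x₁ - u x₁) + (v x₂ - u x₂) + (v x₃ - u x₃)) := by
  have hspan : vectorSpan ℝ (Set.range ![x₁, x₂, x₃]) = ⊤ :=
    AffineSubspace.vectorSpan_eq_top_of_affineSpan_eq_top ℝ _ _ <|
      hnd.affineSpan_eq_top_iff_card_eq_finrank_add_one.mpr (by simp)
  obtain ⟨C, hC, hgrad⟩ := exists_norm_le_mul_sum_of_vectorSpan_eq_top hspan
  refine ⟨C, hC, fun L hL H hH u v gu gv hu hv h₁ h₂ h₃ => ?_⟩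
  have hlin : ∀ w, (v - u).linear w = ⟪gv - gu, w⟫ := fun w => by
    rw [AffineMap.sub_linear, LinearMap.sub_apply, hu, hv, inner_sub_left]
  have hpos : ∀ i, 0 ≤ (v - u) (![x₁, x₂, x₃] i) := by
    intro i
    fin_cases i <;> simpa
  calc |H gv - H gu| ≤ L * ‖gv - gu‖ := by
        simpa [Real.coe_toNNReal L hL, ← dist_eq_norm, ← Real.dist_eq] using hH.dist_le_mul gv gu
    _ ≤ L * (C * ∑ i, (v - u) (![x₁, x₂, x₃] i)) := by
        gcongr
        exact hgrad (v - u) (gv - gu) hlin hpos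
    _ = _ := by
        simp only [Fin.sum_univ_three, AffineMap.coe_sub, Pi.sub_apply, Matrix.cons_val_zero,
          Matrix.cons_val_one, Matrix.cons_val]
        ring
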